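/- Let A be a one-counter automaton with state set Q, and let w be a word accepted by A. Then there exists a word y that is a subword of w and is accepted by A via a run in which the counter value never exceeds |Q|² + 1. -/
import Mathlib


/-- Counter actions of a one-counter automaton. -/
inductive CAct
  | inc | dec | internal | zero
deriving DecidableEq

/-- A one-counter automaton: transitions labelled by an optional letter
(ε-transitions allowed) and a counter action. -/
structure OCA (Q A : Type) where
  trans : Set (Q × Option A × CAct × Q)
  start : Q
  final : Set Q

/-- One step of an OCA on configurations (state, counter ∈ ℕ). -/
def OCA.Step {Q A : Type} (M : OCA Q A) (x : Q × ℕ) (a : Option A) (y : Q × ℕ) : Prop :=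
  ((x.1, a, CAct.inc, y.1) ∈ M.trans ∧ y.2 = x.2 + 1) ∨
  ((x.1, a, CAct.dec, y.1) ∈ M.trans ∧ x.2 = y.2 + 1) ∨
  ((x.1, a, CAct.internal, y.1) ∈ M.trans ∧ y.2 = x.2) ∨
  ((x.1, a, CAct.zero, y.1) ∈ M.trans ∧ x.2 = 0 ∧ y.2 = 0)

/-- A run of an OCA from a configuration to a configuration, reading a word. -/
inductive OCA.Run {Q A : Type} (M : OCA Q A) : Q × ℕ → List A → Q × ℕ → Prop
  | nil (x : Q × ℕ) : OCA.Run M x [] x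
  | cons {x y z : Q × ℕ} {a : Option A} {w : List A} :
      M.Step x a y → OCA.Run M y w z → OCA.Run M x (a.toList ++ w) z

/-- A run of an OCA in which every counter value along the run is at most B. -/
inductive OCA.RunLe {Q A : Type} (M : OCA Q A) (B : ℕ) : Q × ℕ → List A → Q × ℕ → Prop
  | nil (x : Q × ℕ) : x.2 ≤ B → OCA.RunLe M B x [] x
  | cons {x y z : Q × ℕ} {a : Option A} {w : List A} :
      x.2 ≤ B → M.Step x a y → OCA.RunLe M B y w z → OCA.RunLe M B x (a.toList ++ w) z

section Aux

variable {Q A : Type}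

/-- Index-based presentation of runs. -/
def IdxRun (M : OCA Q A) (N : ℕ) (ρ : ℕ → Q × ℕ) (lab : ℕ → Option A) : Prop :=
  ∀ i, i < N → M.Step (ρ i) (lab i) (ρ (i+1))

/-- The word read by the labels `lab 0, …, lab (N-1)`. -/
def labWord : ℕ → (ℕ → Option A) → List A
  | 0, _ => []
  | N+1, lab => (lab 0).toList ++ labWord N (fun i => lab (i+1))

lemma labWord_congr : ∀ {N : ℕ} {f g : ℕ → Option A},
    (∀ i, i < N → f i = g i) → labWord N f = labWord N g
  | 0, _, _, _ => rfl
  | N+1, f, g, h => by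
      simp only [labWord, h 0 (Nat.succ_pos _)]
      rw [labWord_congr (fun i hi => h (i+1) (by omega))]

lemma labWord_add : ∀ (m n : ℕ) (f : ℕ → Option A),
    labWord (m + n) f = labWord m f ++ labWord n (fun i => f (m + i))
  | 0, n, f => by
      rw [Nat.zero_add]
      exact labWord_congr fun i _ => congrArg f (Nat.zero_add i).symm
  | m+1, n, f => by
      rw [show m + 1 + n = (m + n) + 1 from by omega]
      simp only [labWord]
      rw [labWord_add m n (fun i => f (i+1)), List.append_assoc]
      congr 1
      congr 1
      exact labWord_congr fun i _ => congrArg f (by omega)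

variable {M : OCA Q A}

lemma step_counter {x y : Q × ℕ} {a : Option A} (h : M.Step x a y) :
    y.2 ≤ x.2 + 1 ∧ x.2 ≤ y.2 + 1 := by
  rcases h with ⟨_, hc⟩ | ⟨_, hc⟩ | ⟨_, hc⟩ | ⟨_, hc, hc'⟩ <;> omega

lemma step_shift {x y : Q × ℕ} {a : Option A} {δ : ℕ} (h : M.Step x a y)
    (hδ : 1 ≤ δ) (hx : δ ≤ x.2) (hy : δ ≤ y.2) :
    M.Step (x.1, x.2 - δ) a (y.1, y.2 - δ) := by
  rcases h with ⟨h, hc⟩ | ⟨h, hc⟩ | ⟨h, hc⟩ | ⟨h, hc, hc'⟩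
  · exact Or.inl ⟨h, by omega⟩
  · exact Or.inr (Or.inl ⟨h, by omega⟩)
  · exact Or.inr (Or.inr (Or.inl ⟨h, by omega⟩))
  · exact absurd hx (by omega)

lemma ivt_up (f : ℕ → ℕ) (hs : ∀ k, f (k+1) ≤ f k + 1) {i j v : ℕ} (hij : i ≤ j)
    (h1 : f i ≤ v) (h2 : v ≤ f j) : ∃ k, i ≤ k ∧ k ≤ j ∧ f k = v := by
  induction j, hij using Nat.le_induction with
  | base => exact ⟨i, le_refl i, le_refl i, by omega⟩
  | succ j hij ih =>
    by_cases h : v ≤ f j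
    · obtain ⟨k, h3, h4, h5⟩ := ih h
      exact ⟨k, h3, by omega, h5⟩
    · exact ⟨j+1, by omega, le_refl _, by have := hs j; omega⟩

lemma ivt_down (f : ℕ → ℕ) (hs : ∀ k, f k ≤ f (k+1) + 1) {i j v : ℕ} (hij : i ≤ j)
    (h1 : f j ≤ v) (h2 : v ≤ f i) : ∃ k, i ≤ k ∧ k ≤ j ∧ f k = v := by
  induction j, hij using Nat.le_induction with
  | base => exact ⟨i, le_refl i, le_refl i, by omega⟩
  | succ j hij ih =>
    by_cases h : f j ≤ v
    · obtain ⟨k, h3, h4, h5⟩ := ih h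
      exact ⟨k, h3, by omega, h5⟩
    · exact ⟨j+1, by omega, le_refl _, by have := hs j; omega⟩

lemma last_above (f : ℕ → ℕ) (hup : ∀ k, f (k+1) ≤ f k + 1) {p ℓ : ℕ}
    (hex : ∃ k, k ≤ p ∧ f k = ℓ) (hfp : ℓ ≤ f p) :
    f (Nat.findGreatest (fun k => f k = ℓ) p) = ℓ ∧
    ∀ k, Nat.findGreatest (fun k => f k = ℓ) p < k → k ≤ p → ℓ < f k := by
  obtain ⟨k0, hk0, hk0'⟩ := hex
  refine ⟨Nat.findGreatest_spec (P := fun k => f k = ℓ) hk0 hk0', fun k h1 h2 => ?_⟩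
  rcases lt_trichotomy (f k) ℓ with h | h | h
  · obtain ⟨k', h3, h4, h5⟩ := ivt_up f hup h2 (le_of_lt h) hfp
    exact absurd h5 (Nat.findGreatest_is_greatest (P := fun k => f k = ℓ) (lt_of_lt_of_le h1 h3) h4)
  · exact absurd h (Nat.findGreatest_is_greatest (P := fun k => f k = ℓ) h1 h2)
  · exact h

lemma first_above (f : ℕ → ℕ) (hdn : ∀ k, f k ≤ f (k+1) + 1) {p ℓ : ℕ}
    (hex : ∃ t, f (p + t) = ℓ) (hfp : ℓ ≤ f p) :
    f (p + Nat.find hex) = ℓ ∧ ∀ k, p ≤ k → k < p + Nat.find hex → ℓ < f k := by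
  refine ⟨Nat.find_spec hex, fun k h1 h2 => ?_⟩
  rcases lt_trichotomy (f k) ℓ with h | h | h
  · obtain ⟨k', h3, h4, h5⟩ := ivt_down f hdn h1 (le_of_lt h) hfp
    have hne : ¬ (f (p + (k' - p)) = ℓ) := Nat.find_min hex (by omega)
    exact absurd (by rwa [show p + (k' - p) = k' from by omega]) hne
  · have hne : ¬ (f (p + (k - p)) = ℓ) := Nat.find_min hex (by omega)
    exact absurd (by rwa [show p + (k - p) = k from by omega]) hne
  · exact h

end Aux
section Aux2
variable {Q A : Type} {M : OCA Q A}

lemma run_to_idx {x z : Q × ℕ} {w : List A} (h : M.Run x w z) :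
    ∃ N ρ lab, IdxRun M N ρ lab ∧ ρ 0 = x ∧ ρ N = z ∧ w = labWord N lab := by
  induction h with
  | nil x => exact ⟨0, fun _ => x, fun _ => none, fun i hi => absurd hi (by omega), rfl, rfl, rfl⟩
  | @cons x y z a w hstep _ ih =>
    obtain ⟨N, ρ, lab, hidx, h0, hN, hw⟩ := ih
    refine ⟨N+1, fun k => match k with | 0 => x | k+1 => ρ k,
      fun k => match k with | 0 => a | k+1 => lab k, ?_, rfl, hN, ?_⟩
    · intro i hi
      match i with
      | 0 => simpa [h0] using hstep
      | i+1 => exact hidx i (by omega)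
    · simp only [labWord, hw]

lemma idx_to_runle {B : ℕ} :
    ∀ (N : ℕ) (ρ : ℕ → Q × ℕ) (lab : ℕ → Option A), IdxRun M N ρ lab →
    (∀ k, k ≤ N → (ρ k).2 ≤ B) → M.RunLe B (ρ 0) (labWord N lab) (ρ N) := by
  intro N
  induction N with
  | zero => exact fun ρ lab _ hb => OCA.RunLe.nil (ρ 0) (hb 0 le_rfl)
  | succ N ih =>
    intro ρ lab hidx hb
    have tail := ih (fun k => ρ (k+1)) (fun k => lab (k+1))
      (fun i hi => hidx (i+1) (by omega)) (fun k hk => hb (k+1) (by omega))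
    exact OCA.RunLe.cons (hb 0 (by omega)) (hidx 0 (by omega)) tail

lemma cutTail {N : ℕ} {ρ : ℕ → Q × ℕ} {lab : ℕ → Option A}
    {i1 j1 δ : ℕ} (h : IdxRun M N ρ lab) (hij : i1 < j1) (hjN : j1 ≤ N)
    (hst : (ρ i1).1 = (ρ j1).1) (hδ : 1 ≤ δ) (hcnt : (ρ j1).2 = (ρ i1).2 + δ)
    (hsuf : ∀ k, j1 ≤ k → k ≤ N → δ ≤ (ρ k).2) :
    ∃ N' ρ' lab', IdxRun M N' ρ' lab' ∧ N' < N ∧ ρ' 0 = ρ 0 ∧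
      ρ' N' = ((ρ N).1, (ρ N).2 - δ) ∧ (labWord N' lab').Sublist (labWord N lab) := by
  set c1 := j1 - i1 with hc1
  set ρ' : ℕ → Q × ℕ := fun k =>
    if k ≤ i1 then ρ k else ((ρ (k + c1)).1, (ρ (k + c1)).2 - δ) with hρ'
  set lab' : ℕ → Option A := fun k => if k < i1 then lab k else lab (k + c1) with hlab'
  have key : ∀ t, i1 ≤ t → ρ' t = ((ρ (t + c1)).1, (ρ (t + c1)).2 - δ) := by
    intro t ht
    by_cases h' : t ≤ i1
    · have hti : t = i1 := le_antisymm h' ht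
      subst hti
      rw [hρ']
      simp only [if_pos h']
      rw [show t + c1 = j1 from by omega]
      exact Prod.ext hst (by omega)
    · rw [hρ']
      simp only [if_neg h']
  refine ⟨N - c1, ρ', lab', ?_, by omega, by rw [hρ']; simp, ?_, ?_⟩
  · intro k hk
    by_cases hki : k + 1 ≤ i1
    · rw [hρ', hlab']
      simp only [if_pos (show k ≤ i1 by omega), if_pos hki, if_pos (show k < i1 by omega)]
      exact h k (by omega)
    · have hk1 : i1 ≤ k := by omega
      rw [key k hk1, key (k+1) (by omega), hlab']
      simp only [if_neg (show ¬ k < i1 by omega)]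
      rw [show k + 1 + c1 = (k + c1) + 1 from by omega]
      exact step_shift (h (k + c1) (by omega)) hδ
        (hsuf _ (by omega) (by omega)) (hsuf _ (by omega) (by omega))
  · rw [key (N - c1) (by omega), show N - c1 + c1 = N from by omega]
  · rw [show N - c1 = i1 + (N - j1) from by omega, labWord_add]
    conv_rhs => rw [show N = i1 + (c1 + (N - j1)) from by omega, labWord_add, labWord_add]
    have hA : labWord i1 lab' = labWord i1 lab :=
      labWord_congr fun i hi => by rw [hlab']; simp only [if_pos hi]
    have hB : labWord (N - j1) (fun i => lab' (i1 + i))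
        = labWord (N - j1) (fun i => lab (i1 + (c1 + i))) :=
      labWord_congr fun i hi => by
        rw [hlab']
        simp only [if_neg (show ¬ i1 + i < i1 by omega)]
        exact congrArg lab (by omega)
    rw [hA, hB]
    exact (List.Sublist.refl _).append (List.sublist_append_right _ _)

end Aux2
section Aux3
variable {Q A : Type} {M : OCA Q A}

lemma cutMid {N : ℕ} {ρ : ℕ → Q × ℕ} {lab : ℕ → Option A}
    {i1 j1 i2 j2 δ : ℕ} (h : IdxRun M N ρ lab)
    (hij1 : i1 < j1) (hj1i2 : j1 ≤ i2) (hi2j2 : i2 ≤ j2) (hj2N : j2 ≤ N)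
    (hst1 : (ρ i1).1 = (ρ j1).1) (hst2 : (ρ i2).1 = (ρ j2).1)
    (hδ : 1 ≤ δ) (hcnt1 : (ρ j1).2 = (ρ i1).2 + δ) (hcnt2 : (ρ i2).2 = (ρ j2).2 + δ)
    (hmid : ∀ k, j1 ≤ k → k ≤ i2 → δ ≤ (ρ k).2) :
    ∃ N' ρ' lab', IdxRun M N' ρ' lab' ∧ N' < N ∧ ρ' 0 = ρ 0 ∧
      ρ' N' = ρ N ∧ (labWord N' lab').Sublist (labWord N lab) := by
  set c1 := j1 - i1 with hc1
  set c2 := j2 - i2 with hc2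
  set N' := i1 + ((i2 - j1) + (N - j2)) with hN'
  set ρ' : ℕ → Q × ℕ := fun k =>
    if k ≤ i1 then ρ k
    else if k ≤ i2 - c1 then ((ρ (k + c1)).1, (ρ (k + c1)).2 - δ)
    else ρ (k + c1 + c2) with hρ'
  set lab' : ℕ → Option A := fun k =>
    if k < i1 then lab k
    else if k < i2 - c1 then lab (k + c1)
    else lab (k + c1 + c2) with hlab'
  have e12 : i2 - c1 = i1 + (i2 - j1) := by omega
  have key2 : ∀ t, i1 ≤ t → t ≤ i2 - c1 →
      ρ' t = ((ρ (t + c1)).1, (ρ (t + c1)).2 - δ) := by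
    intro t ht1 ht2
    by_cases h' : t ≤ i1
    · have hti : t = i1 := le_antisymm h' ht1
      subst hti
      rw [hρ']
      simp only [if_pos h']
      rw [show t + c1 = j1 from by omega]
      exact Prod.ext hst1 (by omega)
    · rw [hρ']
      simp only [if_neg h', if_pos ht2]
  have key3 : ∀ t, i2 - c1 ≤ t → ρ' t = ρ (t + c1 + c2) := by
    intro t ht
    by_cases h' : t ≤ i1
    · -- then i1 = t = i2 - c1, so j1 = i2
      have ht1 : t = i1 := by omega
      have hji : j1 = i2 := by omega
      rw [hρ']
      simp only [if_pos h']
      rw [hji] at hst1 hcnt1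
      rw [show t + c1 + c2 = j2 from by omega, ht1]
      exact Prod.ext (hst1.trans hst2) (by omega)
    · by_cases h'' : t ≤ i2 - c1
      · have ht2 : t = i2 - c1 := le_antisymm h'' ht
        rw [key2 t (by omega) h'']
        rw [show t + c1 = i2 from by omega, show i2 + c2 = j2 from by omega]
        exact Prod.ext hst2 (by omega)
      · rw [hρ']
        simp only [if_neg h', if_neg h'']
  refine ⟨N', ρ', lab', ?_, by omega, by rw [hρ']; simp, ?_, ?_⟩
  · intro k hk
    rcases (show k + 1 ≤ i1 ∨ (i1 ≤ k ∧ k + 1 ≤ i2 - c1) ∨ i2 - c1 ≤ k by omega)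
      with hc | ⟨hc, hc'⟩ | hc
    · rw [hρ', hlab']
      simp only [if_pos (show k ≤ i1 by omega), if_pos hc, if_pos (show k < i1 by omega)]
      exact h k (by omega)
    · rw [key2 k hc (by omega), key2 (k+1) (by omega) hc', hlab']
      simp only [if_neg (show ¬ k < i1 by omega), if_pos (show k < i2 - c1 by omega)]
      rw [show k + 1 + c1 = (k + c1) + 1 from by omega]
      exact step_shift (h (k + c1) (by omega)) hδ
        (hmid _ (by omega) (by omega)) (hmid _ (by omega) (by omega))
    · rw [key3 k hc, key3 (k+1) (by omega), hlab']
      simp only [if_neg (show ¬ k < i1 by omega), if_neg (show ¬ k < i2 - c1 by omega)]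
      rw [show k + 1 + c1 + c2 = (k + c1 + c2) + 1 from by omega]
      exact h (k + c1 + c2) (by omega)
  · rw [key3 N' (by omega), show N' + c1 + c2 = N from by omega]
  · rw [hN', labWord_add, labWord_add]
    conv_rhs => rw [show N = i1 + (c1 + ((i2 - j1) + (c2 + (N - j2)))) from by omega,
      labWord_add, labWord_add, labWord_add, labWord_add]
    have hA : labWord i1 lab' = labWord i1 lab :=
      labWord_congr fun i hi => by rw [hlab']; simp only [if_pos hi]
    have hB : labWord (i2 - j1) (fun i => lab' (i1 + i))
        = labWord (i2 - j1) (fun i => lab (i1 + (c1 + i))) :=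
      labWord_congr fun i hi => by
        rw [hlab']
        simp only [if_neg (show ¬ i1 + i < i1 by omega),
          if_pos (show i1 + i < i2 - c1 by omega)]
        exact congrArg lab (by omega)
    have hC : labWord (N - j2) (fun i => lab' (i1 + ((i2 - j1) + i)))
        = labWord (N - j2) (fun i => lab (i1 + (c1 + ((i2 - j1) + (c2 + i))))) :=
      labWord_congr fun i hi => by
        rw [hlab']
        simp only [if_neg (show ¬ i1 + ((i2 - j1) + i) < i1 by omega),
          if_neg (show ¬ i1 + ((i2 - j1) + i) < i2 - c1 by omega)]
        exact congrArg lab (by omega)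
    rw [hA, hB, hC]
    refine (List.Sublist.refl _).append ?_
    refine List.Sublist.trans ?_ (List.sublist_append_right _ _)
    exact (List.Sublist.refl _).append (List.sublist_append_right _ _)

end Aux3
lemma mainIdx {Q A : Type} [Fintype Q] (M : OCA Q A) :
    ∀ N (ρ : ℕ → Q × ℕ) (lab : ℕ → Option A), IdxRun M N ρ lab →
    ρ 0 = (M.start, 0) → (ρ N).1 ∈ M.final →
    ∃ y : List A, y.Sublist (labWord N lab) ∧
      ∃ f ∈ M.final, ∃ c : ℕ, M.RunLe (Fintype.card Q ^ 2 + 1) (M.start, 0) y (f, c) := by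
  intro N
  induction N using Nat.strong_induction_on with
  | _ N IH =>
  intro ρ lab hrun h0 hfin
  classical
  set n2 := Fintype.card Q ^ 2 with hn2
  by_cases hbd : ∀ k, k ≤ N → (ρ k).2 ≤ n2 + 1
  · refine ⟨labWord N lab, List.Sublist.refl _, (ρ N).1, hfin, (ρ N).2, ?_⟩
    have hrle := idx_to_runle N ρ lab hrun hbd
    rw [h0] at hrle
    exact hrle
  · push_neg at hbd
    obtain ⟨k0, hk0N, hk0⟩ := hbd
    obtain ⟨p, hp_mem, hp_max⟩ := Finset.exists_max_image (Finset.range (N+1))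
      (fun k => (ρ k).2) ⟨0, Finset.mem_range.mpr (by omega)⟩
    have hpN : p ≤ N := by
      have := Finset.mem_range.mp hp_mem; omega
    set g : ℕ → ℕ := fun k => (ρ (min k N)).2 with hg
    have hgk : ∀ k, k ≤ N → g k = (ρ k).2 := fun k hk => by
      rw [hg]; simp only [min_eq_left hk]
    have hgup : ∀ k, g (k+1) ≤ g k + 1 := by
      intro k
      by_cases hk : k < N
      · rw [hgk k (by omega), hgk (k+1) (by omega)]
        exact (step_counter (hrun k hk)).1
      · rw [hg]; simp only [min_eq_right (show N ≤ k by omega),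
          min_eq_right (show N ≤ k + 1 by omega)]
        omega
    have hgdn : ∀ k, g k ≤ g (k+1) + 1 := by
      intro k
      by_cases hk : k < N
      · rw [hgk k (by omega), hgk (k+1) (by omega)]
        exact (step_counter (hrun k hk)).2
      · rw [hg]; simp only [min_eq_right (show N ≤ k by omega),
          min_eq_right (show N ≤ k + 1 by omega)]
        omega
    have hmB : n2 + 1 < g p := by
      rw [hgk p hpN]
      exact lt_of_lt_of_le hk0 (hp_max k0 (Finset.mem_range.mpr (by omega)))
    have hg0 : g 0 = 0 := by rw [hgk 0 (by omega), h0]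
    set pF : ℕ → Q × Q := fun ℓ =>
      (if ℓ ≤ g N then (ρ (Nat.findGreatest (fun k => g k = ℓ) N)).1
       else (ρ (Nat.findGreatest (fun k => g k = ℓ) p)).1,
       if ℓ ≤ g N then (ρ N).1
       else (ρ (if hx : ∃ t, g (p + t) = ℓ then p + Nat.find hx else 0)).1) with hpF
    have H : ∀ v, g N < v → v < g p →
        (g (Nat.findGreatest (fun k => g k = v) p) = v) ∧
        (∀ k, Nat.findGreatest (fun k => g k = v) p < k → k ≤ p → v < g k) ∧
        ∃ hx : ∃ t, g (p + t) = v,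
          p + Nat.find hx ≤ N ∧ g (p + Nat.find hx) = v ∧
          (∀ k, p ≤ k → k < p + Nat.find hx → v < g k) := by
      intro v hv1 hv2
      have hexu : ∃ k, k ≤ p ∧ g k = v := by
        obtain ⟨k, _, hk2, hk3⟩ := ivt_up g hgup (v := v) (Nat.zero_le p) (by omega) (by omega)
        exact ⟨k, hk2, hk3⟩
      obtain ⟨hs, ha⟩ := last_above g hgup hexu (by omega)
      obtain ⟨k, hk1, hk2, hk3⟩ := ivt_down g hgdn (v := v) hpN (by omega) (by omega)
      have hx : ∃ t, g (p + t) = v :=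
        ⟨k - p, by rw [show p + (k - p) = k from by omega]; exact hk3⟩
      obtain ⟨hs', ha'⟩ := first_above g hgdn hx (by omega)
      refine ⟨hs, ha, hx, ?_, hs', ha'⟩
      have : Nat.find hx ≤ k - p :=
        Nat.find_min' hx (by rw [show p + (k - p) = k from by omega]; exact hk3)
      omega
    have key : ∀ ℓ ℓ', 1 ≤ ℓ → ℓ < ℓ' → ℓ' ≤ n2 + 1 → pF ℓ = pF ℓ' →
        ∃ y : List A, y.Sublist (labWord N lab) ∧
          ∃ f ∈ M.final, ∃ c : ℕ, M.RunLe (Fintype.card Q ^ 2 + 1) (M.start, 0) y (f, c) := by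
      intro ℓ ℓ' hℓ1 hℓℓ' hℓ'B hpair
      have h1 := congrArg Prod.fst hpair
      have h2 := congrArg Prod.snd hpair
      simp only [hpF] at h1 h2
      set δ := ℓ' - ℓ with hδdef
      have hδ : 1 ≤ δ := by omega
      have hℓ'm : ℓ' < g p := by omega
      by_cases hcA : ℓ' ≤ g N
      · -- Case A : both levels reached again before the end; cut the ascent, shift the tail
        have hℓc : ℓ ≤ g N := by omega
        have hexℓ : ∃ k, k ≤ N ∧ g k = ℓ := by
          obtain ⟨k, _, hk2, hk3⟩ := ivt_up g hgup (v := ℓ) (Nat.zero_le N) (by omega) (by omega)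
          exact ⟨k, hk2, hk3⟩
        have hexℓ' : ∃ k, k ≤ N ∧ g k = ℓ' := by
          obtain ⟨k, _, hk2, hk3⟩ := ivt_up g hgup (v := ℓ') (Nat.zero_le N) (by omega) (by omega)
          exact ⟨k, hk2, hk3⟩
        obtain ⟨hUℓs, hUℓa⟩ := last_above g hgup hexℓ (by omega)
        obtain ⟨hUℓ's, hUℓ'a⟩ := last_above g hgup hexℓ' (by omega)
        rw [if_pos hℓc, if_pos hcA] at h1
        set u1 := Nat.findGreatest (fun k => g k = ℓ) N with hu1
        set u2 := Nat.findGreatest (fun k => g k = ℓ') N with hu2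
        have hu1N : u1 ≤ N := Nat.findGreatest_le N
        have hu2N : u2 ≤ N := Nat.findGreatest_le N
        have hord : u1 < u2 := by
          rcases lt_trichotomy u1 u2 with h | h | h
          · exact h
          · rw [h, hUℓ's] at hUℓs; omega
          · have := hUℓ'a u1 h hu1N; omega
        obtain ⟨N', ρ', lab', hrun', hlt', h0', hend', hsub'⟩ :=
          cutTail hrun hord hu2N h1 hδ
            (by rw [← hgk u2 hu2N, ← hgk u1 hu1N, hUℓs, hUℓ's]; omega)
            (fun k hk1 hk2 => by
              rw [← hgk k hk2]
              rcases eq_or_lt_of_le hk1 with h | h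
              · rw [← h, hUℓ's]; omega
              · have := hUℓ'a k h hk2; omega)
        obtain ⟨y, hy, rest⟩ := IH N' hlt' ρ' lab' hrun' (h0'.trans h0)
          (by rw [hend']; exact hfin)
        exact ⟨y, hy.trans hsub', rest⟩
      · by_cases hcC : ℓ ≤ g N
        · -- Case C : low level reached again before the end, high level not
          have hexℓ : ∃ k, k ≤ N ∧ g k = ℓ := by
            obtain ⟨k, _, hk2, hk3⟩ := ivt_up g hgup (v := ℓ) (Nat.zero_le N) (by omega) (by omega)
            exact ⟨k, hk2, hk3⟩
          obtain ⟨hsUb, haUb⟩ := last_above g hgup hexℓ (by omega)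
          obtain ⟨hsuℓ', hauℓ', hxℓ', hdNℓ', hsdℓ', hadℓ'⟩ := H ℓ' (by omega) (by omega)
          rw [if_pos hcC, if_neg hcA] at h1
          rw [if_pos hcC, if_neg hcA, dif_pos hxℓ'] at h2
          set ub := Nat.findGreatest (fun k => g k = ℓ) N with hub
          set u2 := Nat.findGreatest (fun k => g k = ℓ') p with hu2
          set d2 := p + Nat.find hxℓ' with hd2
          have hubN : ub ≤ N := Nat.findGreatest_le N
          have hu2p : u2 ≤ p := Nat.findGreatest_le p
          have hmid : ∀ k, u2 ≤ k → k ≤ d2 → δ ≤ (ρ k).2 := by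
            intro k hk1 hk2
            have hkN : k ≤ N := le_trans hk2 hdNℓ'
            rw [← hgk k hkN]
            by_cases hkp : k ≤ p
            · rcases eq_or_lt_of_le hk1 with h | h
              · rw [← h, hsuℓ']; omega
              · have := hauℓ' k h hkp; omega
            · rcases eq_or_lt_of_le hk2 with h | h
              · rw [h, hsdℓ']; omega
              · have := hadℓ' k (by omega) h; omega
          by_cases hord : ub < u2
          · have hrun' : IdxRun M d2 ρ lab := fun i hi => hrun i (by omega)
            have hsubT : (labWord d2 lab).Sublist (labWord N lab) := by
              conv_rhs => rw [show N = d2 + (N - d2) from by omega, labWord_add]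
              exact List.sublist_append_left _ _
            obtain ⟨N', ρ', lab', hrun'', hlt', h0', hend', hsub'⟩ :=
              cutTail hrun' hord (le_trans hu2p (by omega)) h1 hδ
                (by rw [← hgk u2 (by omega), ← hgk ub hubN, hsUb, hsuℓ']; omega)
                hmid
            obtain ⟨y, hy, rest⟩ := IH N' (by omega) ρ' lab' hrun'' (h0'.trans h0)
              (by rw [hend']; exact h2 ▸ hfin)
            exact ⟨y, (hy.trans hsub').trans hsubT, rest⟩
          · have hu2ub : u2 < ub := by
              rcases lt_trichotomy u2 ub with h | h | h
              · exact h
              · rw [h, hsUb] at hsuℓ'; omega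
              · omega
            have hpub : p < ub := by
              by_contra hcon
              push_neg at hcon
              have := hauℓ' ub hu2ub hcon
              omega
            have hd2ub : d2 < ub := by
              rcases lt_trichotomy d2 ub with h | h | h
              · exact h
              · rw [← h, hsdℓ'] at hsUb; omega
              · have := hadℓ' ub (by omega) h; omega
            have hrun' : IdxRun M d2 ρ lab := fun i hi => hrun i (by omega)
            have hsubT : (labWord d2 lab).Sublist (labWord N lab) := by
              conv_rhs => rw [show N = d2 + (N - d2) from by omega, labWord_add]
              exact List.sublist_append_left _ _
            obtain ⟨y, hy, rest⟩ := IH d2 (by omega) ρ lab hrun' h0 (h2 ▸ hfin)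
            exact ⟨y, hy.trans hsubT, rest⟩
        · -- Case B : both levels above the final counter; cut a hill
          obtain ⟨hsuℓ, hauℓ, hxℓ, hdNℓ, hsdℓ, hadℓ⟩ := H ℓ (by omega) (by omega)
          obtain ⟨hsuℓ', hauℓ', hxℓ', hdNℓ', hsdℓ', hadℓ'⟩ := H ℓ' (by omega) (by omega)
          rw [if_neg hcC, if_neg hcA] at h1
          rw [if_neg hcC, if_neg hcA, dif_pos hxℓ, dif_pos hxℓ'] at h2
          set u1 := Nat.findGreatest (fun k => g k = ℓ) p with hu1
          set u2 := Nat.findGreatest (fun k => g k = ℓ') p with hu2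
          set d1 := p + Nat.find hxℓ with hd1
          set d2 := p + Nat.find hxℓ' with hd2
          have hu1p : u1 ≤ p := Nat.findGreatest_le p
          have hu2p : u2 ≤ p := Nat.findGreatest_le p
          have hord1 : u1 < u2 := by
            rcases lt_trichotomy u1 u2 with h | h | h
            · exact h
            · rw [h, hsuℓ'] at hsuℓ; omega
            · have := hauℓ' u1 h hu1p; omega
          have hord2 : d2 ≤ d1 := by
            by_contra hcon
            push_neg at hcon
            have := hadℓ' d1 (by omega) hcon
            omega
          have hmid : ∀ k, u2 ≤ k → k ≤ d2 → δ ≤ (ρ k).2 := by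
            intro k hk1 hk2
            have hkN : k ≤ N := le_trans hk2 hdNℓ'
            rw [← hgk k hkN]
            by_cases hkp : k ≤ p
            · rcases eq_or_lt_of_le hk1 with h | h
              · rw [← h, hsuℓ']; omega
              · have := hauℓ' k h hkp; omega
            · rcases eq_or_lt_of_le hk2 with h | h
              · rw [h, hsdℓ']; omega
              · have := hadℓ' k (by omega) h; omega
          obtain ⟨N', ρ', lab', hrun', hlt', h0', hend', hsub'⟩ :=
            cutMid hrun hord1 (le_trans hu2p (by omega)) hord2 hdNℓ
              h1 h2.symm hδ
              (by rw [← hgk u2 (by omega), ← hgk u1 (by omega), hsuℓ, hsuℓ']; omega)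
              (by rw [← hgk d2 (by omega), ← hgk d1 (by omega), hsdℓ, hsdℓ']; omega)
              hmid
          obtain ⟨y, hy, rest⟩ := IH N' hlt' ρ' lab' hrun' (h0'.trans h0)
            (by rw [hend']; exact hfin)
          exact ⟨y, hy.trans hsub', rest⟩
    have hcard : (Finset.univ : Finset (Q × Q)).card < (Finset.Icc 1 (n2+1)).card := by
      rw [Nat.card_Icc, Finset.card_univ, Fintype.card_prod, hn2, pow_two]
      omega
    obtain ⟨a, ha, b, hb, hab, hpq⟩ :=
      Finset.exists_ne_map_eq_of_card_lt_of_maps_to hcard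
        (fun ℓ _ => Finset.mem_univ (pF ℓ))
    simp only [Finset.mem_Icc] at ha hb
    rcases hab.lt_or_gt with h | h
    · exact key a b ha.1 h hb.2 hpq
    · exact key b a hb.1 h ha.2 hpq.symm


/-- If w is accepted by an OCA A with state set Q, then some subword y of w is
accepted by A via a run in which the counter never exceeds |Q|² + 1. -/
theorem accepted_subword_bounded_counter {Q A : Type} [Fintype Q] (M : OCA Q A)
    (w : List A)
    (hacc : ∃ f ∈ M.final, ∃ c : ℕ, M.Run (M.start, 0) w (f, c)) :
    ∃ y : List A, y.Sublist w ∧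
      ∃ f ∈ M.final, ∃ c : ℕ,
        M.RunLe (Fintype.card Q ^ 2 + 1) (M.start, 0) y (f, c) := by
  obtain ⟨f, hf, c, hrun⟩ := hacc
  obtain ⟨N, ρ, lab, hidx, h0, hN, hw⟩ := run_to_idx hrun
  have hfin : (ρ N).1 ∈ M.final := by rw [hN]; exact hf
  obtain ⟨y, hy, rest⟩ := mainIdx M N ρ lab hidx h0 hfin
  exact ⟨y, hw ▸ hy, rest⟩
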